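/- arXiv:2604.14471 — 2 statements merged into one kernel-verified Lean document; each statement's English description precedes it below -/
import Mathlib

section
/- Let G be the regular square grid x·ℤ² in ℝ² with cell side length x > 0, and let T be an isosceles triangle whose two equal sides have length t and meet at angle φ. If t ≥ 4x/sin φ, then T contains a point of the grid G. -/
/-!
Put `u = B - A`, `w = C - A`. A displacement `α • u + β • w` has norm at least
`|α| ‖u‖ sin ∠BAC`, the distance from `α • u` to the line `ℝ w`, and symmetrically for `β`.
Hence moving the point `A + (u + w) / 4`, whose barycentric coordinates are `(1/2, 1/4, 1/4)`,
by at most `t sin φ / 4` changes the coordinates along `u` and `w` by at most `1/4`, so the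
closed disc of that radius around it lies in the triangle. Rounding coordinates gives a grid
point within `x ≤ t sin φ / 4` of its centre.
-/

open InnerProductGeometry

theorem abs_round_div_mul_sub_le {x : ℝ} (hx : 0 < x) (y : ℝ) :
    |round (y / x) * x - y| ≤ x / 2 := by
  have h : round (y / x) * x - y = -(y / x - round (y / x)) * x := by field_simp; ring
  rw [h, abs_mul, abs_neg, abs_of_pos hx]
  linarith [mul_le_mul_of_nonneg_right (abs_sub_round (y / x)) hx.le]

theorem exists_dist_intGrid_le {x : ℝ} (hx : 0 < x) (p : EuclideanSpace ℝ (Fin 2)) :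
    ∃ a b : ℤ, dist (!₂[(a : ℝ) * x, (b : ℝ) * x] : EuclideanSpace ℝ (Fin 2)) p ≤ x := by
  refine ⟨round (p 0 / x), round (p 1 / x), ?_⟩
  have h0 := abs_round_div_mul_sub_le hx (p 0)
  have h1 := abs_round_div_mul_sub_le hx (p 1)
  rw [EuclideanSpace.dist_eq, Real.sqrt_le_left hx.le, Fin.sum_univ_two]
  simp only [Real.dist_eq, Matrix.cons_val_zero, Matrix.cons_val_one]
  have h0' := pow_le_pow_left₀ (abs_nonneg _) h0 2
  have h1' := pow_le_pow_left₀ (abs_nonneg _) h1 2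
  linarith [sq_nonneg x]

section Triangle

variable {V : Type*} [NormedAddCommGroup V] [InnerProductSpace ℝ V]

theorem add_smul_sub_add_smul_sub_mem_convexHull (A B C : V) {s q : ℝ} (hs : 0 ≤ s)
    (hq : 0 ≤ q) (hsq : s + q ≤ 1) :
    A + s • (B - A) + q • (C - A) ∈ convexHull ℝ {A, B, C} := by
  have hmem : (1 - s - q) • A + s • B + q • C ∈ convexHull ℝ {A, B, C} := by
    have := (convex_convexHull ℝ ({A, B, C} : Set V)).sum_mem (t := Finset.univ)
      (w := ![1 - s - q, s, q]) (z := ![A, B, C]) ?_ ?_ ?_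
    · simpa [Fin.sum_univ_three, add_assoc] using this
    · intro i _; fin_cases i <;> simp <;> linarith
    · simp [Fin.sum_univ_three]; ring
    · intro i _; fin_cases i <;> exact subset_convexHull ℝ _ (by simp)
  convert hmem using 1
  simp only [smul_sub, sub_smul, one_smul]
  abel

theorem abs_mul_norm_mul_sin_angle_le_norm_smul_add_smul (u w : V) (α β : ℝ) :
    |α| * ‖u‖ * Real.sin (angle u w) ≤ ‖α • u + β • w‖ := by
  have hinner := cos_angle_mul_norm_mul_norm u w
  have hsq : ‖α • u + β • w‖ ^ 2
      = (β * ‖w‖ + α * ‖u‖ * Real.cos (angle u w)) ^ 2 + (α * ‖u‖ * Real.sin (angle u w)) ^ 2 := by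
    rw [norm_add_sq_real, norm_smul, norm_smul, inner_smul_left, inner_smul_right, ← hinner]
    simp only [Real.norm_eq_abs, mul_pow, sq_abs, conj_trivial]
    linear_combination (-(α * ‖u‖) ^ 2) * Real.sin_sq_add_cos_sq (angle u w)
  calc |α| * ‖u‖ * Real.sin (angle u w) = |α * ‖u‖ * Real.sin (angle u w)| := by
        rw [abs_mul, abs_mul, abs_norm, abs_of_nonneg (sin_angle_nonneg u w)]
    _ ≤ |‖α • u + β • w‖| := sq_le_sq.mp (by rw [hsq]; exact le_add_of_nonneg_left (sq_nonneg _))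
    _ = ‖α • u + β • w‖ := abs_norm _

theorem closedBall_subset_convexHull_triple (hV : Module.finrank ℝ V = 2) (A B C : V) {r : ℝ}
    (hr : 0 < r) (hB : 4 * r ≤ ‖B - A‖ * Real.sin (angle (B - A) (C - A)))
    (hC : 4 * r ≤ ‖C - A‖ * Real.sin (angle (B - A) (C - A))) :
    Metric.closedBall (A + (1 / 4 : ℝ) • ((B - A) + (C - A))) r ⊆ convexHull ℝ {A, B, C} := by
  intro p hp
  rw [Metric.mem_closedBall, dist_eq_norm] at hp
  set u := B - A
  set w := C - A
  have hu : 0 < ‖u‖ * Real.sin (angle u w) := by linarith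
  have hw : 0 < ‖w‖ * Real.sin (angle u w) := by linarith
  have hli : LinearIndependent ℝ ![u, w] := by
    refine LinearIndependent.pair_iff.mpr fun s q hsq => ⟨?_, ?_⟩
    · have := abs_mul_norm_mul_sin_angle_le_norm_smul_add_smul u w s q
      rw [hsq, norm_zero, mul_assoc] at this
      exact abs_nonpos_iff.mp (nonpos_of_mul_nonpos_left this hu)
    · have := abs_mul_norm_mul_sin_angle_le_norm_smul_add_smul w u q s
      rw [add_comm, hsq, norm_zero, angle_comm, mul_assoc] at this
      exact abs_nonpos_iff.mp (nonpos_of_mul_nonpos_left this hw)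
  have hspan := hli.span_eq_top_of_card_eq_finrank (by simp [hV])
  rw [Matrix.range_cons_cons_empty] at hspan
  obtain ⟨s, q, hsq⟩ := Submodule.mem_span_pair.mp (hspan ▸ Submodule.mem_top (x := p - A))
  obtain rfl : p = A + s • u + q • w := by rw [add_assoc, hsq, add_sub_cancel]
  have hdev : A + s • u + q • w - (A + (1 / 4 : ℝ) • (u + w))
      = (s - 1 / 4) • u + (q - 1 / 4) • w := by module
  rw [hdev] at hp
  have hs := abs_mul_norm_mul_sin_angle_le_norm_smul_add_smul u w (s - 1 / 4) (q - 1 / 4)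
  have hq := abs_mul_norm_mul_sin_angle_le_norm_smul_add_smul w u (q - 1 / 4) (s - 1 / 4)
  rw [add_comm, angle_comm] at hq
  rw [mul_assoc] at hs hq
  have hs' : |s - 1 / 4| ≤ 1 / 4 := le_of_mul_le_mul_right (by linarith) hu
  have hq' : |q - 1 / 4| ≤ 1 / 4 := le_of_mul_le_mul_right (by linarith) hw
  rw [abs_le] at hs' hq'
  exact add_smul_sub_add_smul_sub_mem_convexHull A B C (by linarith) (by linarith) (by linarith)

end Triangle

/-- If an isosceles triangle has two equal sides of length `t ≥ 4x/sin φ`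
meeting at angle `φ`, then it contains a point of the grid `x·ℤ²`. -/
theorem stmt1 (x t φ : ℝ) (hx : 0 < x) (hφ0 : 0 < φ) (hφπ : φ < Real.pi)
    (A B C : EuclideanSpace ℝ (Fin 2))
    (hAB : dist A B = t) (hAC : dist A C = t)
    (hangle : EuclideanGeometry.angle B A C = φ)
    (ht : t ≥ 4 * x / Real.sin φ) :
    ∃ a b : ℤ, (!₂[(a : ℝ) * x, (b : ℝ) * x] : EuclideanSpace ℝ (Fin 2)) ∈
      convexHull ℝ {A, B, C} := by
  have hsin : 0 < Real.sin φ := Real.sin_pos_of_pos_of_lt_pi hφ0 hφπ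
  have hxt : 4 * x ≤ t * Real.sin φ := (div_le_iff₀ hsin).mp ht
  have hsides : ‖B - A‖ = t ∧ ‖C - A‖ = t := by
    rw [← dist_eq_norm, ← dist_eq_norm, dist_comm B, dist_comm C]
    exact ⟨hAB, hAC⟩
  have hφ : angle (B - A) (C - A) = φ := hangle
  obtain ⟨a, b, hab⟩ := exists_dist_intGrid_le hx (A + (1 / 4 : ℝ) • ((B - A) + (C - A)))
  refine ⟨a, b, closedBall_subset_convexHull_triple finrank_euclideanSpace_fin A B C hx ?_ ?_ hab⟩
  · rwa [hsides.1, hφ]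
  · rwa [hsides.2, hφ]
end

section
/- Any closed Euclidean disk of radius r in the plane can be covered by 7 closed Euclidean disks of radius r/2. -/
/-! Points within `r / 2` of `c` are covered by the disk about `c`. Every other vector `v = x - c`
makes an angle of at most `π / 6` with one of the six unit vectors `u = exp (k π i / 3)`, so
`⟪u, v⟫ ≥ (√3 / 2) ‖v‖`, and then `x` lies within `r / 2` of `c + (√3 / 2) r u`: with `t = ‖v‖`
the squared distance is at most `t² - (3 / 2) r t + (3 / 4) r²`, which is `≤ r² / 4` exactly when
`(2 t - r) (t - r) ≤ 0`, i.e. for `r / 2 ≤ t ≤ r`. -/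

open Complex Metric Set
open scoped Real RealInnerProductSpace

namespace Complex

theorem inner_exp_mul_I (φ : ℝ) (z : ℂ) : ⟪exp (φ * I), z⟫ = ‖z‖ * Real.cos (arg z - φ) := by
  rw [Complex.inner, Real.cos_sub, mul_add, ← mul_assoc, ← mul_assoc, norm_mul_cos_arg,
    norm_mul_sin_arg]
  simp only [mul_re, conj_re, conj_im, exp_ofReal_mul_I_re, exp_ofReal_mul_I_im]
  ring

theorem exists_cos_pi_div_mul_norm_le_inner_exp_pow {n : ℕ} (hn : n ≠ 0) (z : ℂ) :
    ∃ i < n, Real.cos (π / n) * ‖z‖ ≤ ⟪exp (2 * π * I / n) ^ i, z⟫ := by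
  have hω := isPrimitiveRoot_exp n hn
  have : NeZero n := ⟨hn⟩
  set k := round (arg z / (2 * π / n))
  have hk : exp (2 * π * I / n) ^ k = exp (↑(k * (2 * π / n)) * I) := by
    rw [← exp_int_mul]; push_cast; ring_nf
  obtain ⟨i, hi, hik⟩ := hω.eq_pow_of_pow_eq_one (ξ := exp (2 * π * I / n) ^ k) (by
    rw [← zpow_natCast, ← zpow_mul, mul_comm k, zpow_mul, zpow_natCast, hω.pow_eq_one, one_zpow])
  refine ⟨i, hi, ?_⟩
  have hpos : 0 < 2 * π / n := by positivity
  have hclose : |arg z - k * (2 * π / n)| ≤ π / n := by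
    have hround := abs_sub_round (arg z / (2 * π / n))
    calc |arg z - k * (2 * π / n)| = |arg z / (2 * π / n) - k| * (2 * π / n) := by
          rw [← abs_of_pos hpos, ← abs_mul, abs_of_pos hpos, sub_mul, div_mul_cancel₀ _ hpos.ne']
      _ ≤ 1 / 2 * (2 * π / n) := by gcongr
      _ = π / n := by ring
  rw [hik, hk, inner_exp_mul_I, mul_comm, ← Real.cos_abs (arg z - _)]
  gcongr
  exact Real.cos_le_cos_of_nonneg_of_le_pi (abs_nonneg _)
    (div_le_self Real.pi_pos.le (by exact_mod_cast Nat.one_le_iff_ne_zero.2 hn)) hclose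

end Complex

section

variable {E : Type*} [NormedAddCommGroup E] [InnerProductSpace ℝ E]

theorem norm_sub_smul_le_half_of_inner_ge {u x : E} {r : ℝ} (hu : ‖u‖ = 1) (hxr : ‖x‖ ≤ r)
    (hrx : r / 2 ≤ ‖x‖) (hux : √3 / 2 * ‖x‖ ≤ ⟪u, x⟫) : ‖x - (√3 / 2 * r) • u‖ ≤ r / 2 := by
  have hr : 0 ≤ r := (norm_nonneg x).trans hxr
  have h3 : √3 ^ 2 = 3 := Real.sq_sqrt (by norm_num)
  have hsq : ‖x - (√3 / 2 * r) • u‖ ^ 2 = ‖x‖ ^ 2 - √3 * r * ⟪u, x⟫ + 3 / 4 * r ^ 2 := by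
    rw [norm_sub_sq_real, inner_smul_right, real_inner_comm, norm_smul, hu, Real.norm_eq_abs,
      abs_of_nonneg (by positivity)]
    linear_combination (r ^ 2 / 4) * h3
  have key : ‖x‖ ^ 2 + r ^ 2 / 2 ≤ √3 * r * ⟪u, x⟫ :=
    calc ‖x‖ ^ 2 + r ^ 2 / 2 ≤ 3 / 2 * r * ‖x‖ := by nlinarith
      _ = √3 * r * (√3 / 2 * ‖x‖) := by linear_combination (-(r * ‖x‖) / 2) * h3
      _ ≤ √3 * r * ⟪u, x⟫ := by gcongr
  refine (pow_le_pow_iff_left₀ (norm_nonneg _) (by positivity) two_ne_zero).1 ?_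
  rw [hsq]
  linarith

theorem closedBall_subset_closedBall_half_union_iUnion {ι : Type*} (d : ι → E)
    (hd : ∀ i, ‖d i‖ = 1)
    (hcov : ∀ x : E, ∃ i, √3 / 2 * ‖x‖ ≤ ⟪d i, x⟫) (c : E) (r : ℝ) :
    closedBall c r ⊆ closedBall c (r / 2) ∪ ⋃ i, closedBall (c + (√3 / 2 * r) • d i) (r / 2) := by
  intro y hy
  rw [mem_closedBall, dist_eq_norm] at hy
  by_cases hnear : ‖y - c‖ ≤ r / 2
  · exact Or.inl (by rwa [mem_closedBall, dist_eq_norm])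
  obtain ⟨i, hi⟩ := hcov (y - c)
  refine Or.inr (mem_iUnion.2 ⟨i, ?_⟩)
  rw [mem_closedBall, dist_eq_norm, ← sub_sub]
  exact norm_sub_smul_le_half_of_inner_ge (hd i) hy (not_le.1 hnear).le hi

end

/-- Any closed Euclidean disk of radius `r` in the plane can be covered by 7
closed disks of radius `r/2`. -/
theorem stmt4 (c : EuclideanSpace ℝ (Fin 2)) (r : ℝ) :
    ∃ centers : Fin 7 → EuclideanSpace ℝ (Fin 2),
      Metric.closedBall c r ⊆ ⋃ i, Metric.closedBall (centers i) (r / 2) := by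
  let e := Complex.orthonormalBasisOneI.repr
  let d : Fin 6 → EuclideanSpace ℝ (Fin 2) := fun i => e (exp (2 * π * I / 6) ^ (i : ℕ))
  have hω : IsPrimitiveRoot (exp (2 * π * I / 6)) 6 := by
    exact_mod_cast isPrimitiveRoot_exp 6 (by norm_num)
  have hd : ∀ i, ‖d i‖ = 1 := fun i => by
    rw [LinearIsometryEquiv.norm_map, norm_pow, hω.norm'_eq_one (by norm_num), one_pow]
  have hcov : ∀ x, ∃ i, √3 / 2 * ‖x‖ ≤ ⟪d i, x⟫ := fun x => by
    obtain ⟨i, hi, h⟩ :=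
      exists_cos_pi_div_mul_norm_le_inner_exp_pow (n := 6) (by norm_num) (e.symm x)
    refine ⟨⟨i, hi⟩, ?_⟩
    rw [← e.inner_map_map, e.apply_symm_apply, LinearIsometryEquiv.norm_map] at h
    simpa [Real.cos_pi_div_six] using h
  refine ⟨Fin.cons c fun i => c + (√3 / 2 * r) • d i, fun y hy => ?_⟩
  rcases closedBall_subset_closedBall_half_union_iUnion d hd hcov c r hy with h | h
  · exact mem_iUnion.2 ⟨0, h⟩
  · obtain ⟨i, hi⟩ := mem_iUnion.1 h
    exact mem_iUnion.2 ⟨i.succ, hi⟩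
end
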